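/- Let H = p₁² + p₂² + a·q₂^(1/4) on q₂ > 0, set V = a·q₂^(1/4), and let X₈ = p₁[p₂⁷ + (7/2)p₂⁵V + (35/8)p₂³V² + (35/16)p₂V³] + (35a⁴/128)·q₁. Then {H, X₈} = 0. -/
import Mathlib


noncomputable def pb (F G : ℝ → ℝ → ℝ → ℝ → ℝ) (q1 q2 p1 p2 : ℝ) : ℝ :=
  deriv (fun x => F x q2 p1 p2) q1 * deriv (fun x => G q1 q2 x p2) p1
  + deriv (fun x => F q1 x p1 p2) q2 * deriv (fun x => G q1 q2 p1 x) p2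
  - deriv (fun x => F q1 q2 x p2) p1 * deriv (fun x => G x q2 p1 p2) q1
  - deriv (fun x => F q1 q2 p1 x) p2 * deriv (fun x => G q1 x p1 p2) q2

noncomputable def H (a : ℝ) (q1 q2 p1 p2 : ℝ) : ℝ :=
  p1 ^ 2 + p2 ^ 2 + a * q2 ^ ((1 : ℝ) / 4)

noncomputable def X8 (a : ℝ) (q1 q2 p1 p2 : ℝ) : ℝ :=
  p1 * (p2 ^ 7 + (7 / 2) * p2 ^ 5 * (a * q2 ^ ((1 : ℝ) / 4))
    + (35 / 8) * p2 ^ 3 * (a * q2 ^ ((1 : ℝ) / 4)) ^ 2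
    + (35 / 16) * p2 * (a * q2 ^ ((1 : ℝ) / 4)) ^ 3)
  + (35 * a ^ 4 / 128) * q1

theorem stmt7 (a : ℝ) (q1 q2 p1 p2 : ℝ) (hq2 : 0 < q2) :
    pb (H a) (X8 a) q1 q2 p1 p2 = 0 := by
  have hq2' : q2 ≠ 0 := ne_of_gt hq2
  have hrpow : HasDerivAt (fun x : ℝ => x ^ ((1:ℝ)/4))
      (((1:ℝ)/4) * q2 ^ ((1:ℝ)/4 - 1)) q2 :=
    Real.hasDerivAt_rpow_const (Or.inl hq2')
  have hv : HasDerivAt (fun x : ℝ => a * x ^ ((1:ℝ)/4))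
      (a * (((1:ℝ)/4) * q2 ^ ((1:ℝ)/4 - 1))) q2 := hrpow.const_mul a
  set V : ℝ := a * q2 ^ ((1:ℝ)/4) with hV
  set W : ℝ := a * (((1:ℝ)/4) * q2 ^ ((1:ℝ)/4 - 1)) with hW
  -- d1 : ∂H/∂q1 = 0
  have d1 : deriv (fun x => H a x q2 p1 p2) q1 = 0 := by
    simp [H]
  -- d2 : ∂X8/∂p1
  have d2 : deriv (fun x => X8 a q1 q2 x p2) p1
      = p2 ^ 7 + (7/2) * p2 ^ 5 * V + (35/8) * p2 ^ 3 * V ^ 2 + (35/16) * p2 * V ^ 3 := by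
    have h : HasDerivAt (fun x : ℝ => X8 a q1 q2 x p2)
        (1 * (p2 ^ 7 + (7/2) * p2 ^ 5 * V + (35/8) * p2 ^ 3 * V ^ 2 + (35/16) * p2 * V ^ 3)) p1 := by
      unfold X8
      exact ((hasDerivAt_id p1).mul_const _).add_const _
    simpa using h.deriv
  -- d3 : ∂H/∂q2
  have d3 : deriv (fun x => H a q1 x p1 p2) q2 = W := by
    have h : HasDerivAt (fun x : ℝ => H a q1 x p1 p2) W q2 := by
      unfold H
      exact hv.const_add (p1 ^ 2 + p2 ^ 2)
    exact h.deriv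
  -- d4 : ∂X8/∂p2
  have d4 : deriv (fun x => X8 a q1 q2 p1 x) p2
      = p1 * ((7:ℕ) * p2 ^ 6 + (7/2) * ((5:ℕ) * p2 ^ 4) * V
        + (35/8) * ((3:ℕ) * p2 ^ 2) * V ^ 2 + (35/16) * 1 * V ^ 3) := by
    have h : HasDerivAt (fun x : ℝ => X8 a q1 q2 p1 x)
        (p1 * ((7:ℕ) * p2 ^ 6 + (7/2) * ((5:ℕ) * p2 ^ 4) * V
          + (35/8) * ((3:ℕ) * p2 ^ 2) * V ^ 2 + (35/16) * 1 * V ^ 3)) p2 := by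
      unfold X8
      have t1 := (hasDerivAt_pow 7 p2).add
        (((hasDerivAt_pow 5 p2).const_mul ((7:ℝ)/2)).mul_const V)
      have t2 := t1.add (((hasDerivAt_pow 3 p2).const_mul ((35:ℝ)/8)).mul_const (V^2))
      have t3 := t2.add (((hasDerivAt_id p2).const_mul ((35:ℝ)/16)).mul_const (V^3))
      exact (t3.const_mul p1).add_const _
    simpa using h.deriv
  -- d5 : ∂H/∂p1
  have d5 : deriv (fun x => H a q1 q2 x p2) p1 = (2:ℕ) * p1 ^ 1 := by
    have h : HasDerivAt (fun x : ℝ => H a q1 q2 x p2) ((2:ℕ) * p1 ^ 1) p1 := by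
      unfold H
      exact ((hasDerivAt_pow 2 p1).add_const (p2 ^ 2)).add_const _
    exact h.deriv
  -- d6 : ∂X8/∂q1
  have d6 : deriv (fun x => X8 a x q2 p1 p2) q1 = 35 * a ^ 4 / 128 := by
    have h : HasDerivAt (fun x : ℝ => X8 a x q2 p1 p2) ((35 * a ^ 4 / 128) * 1) q1 := by
      unfold X8
      exact (((hasDerivAt_id q1).const_mul (35 * a ^ 4 / 128)).const_add _)
    simpa using h.deriv
  -- d7 : ∂H/∂p2
  have d7 : deriv (fun x => H a q1 q2 p1 x) p2 = (2:ℕ) * p2 ^ 1 := by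
    have h : HasDerivAt (fun x : ℝ => H a q1 q2 p1 x) ((2:ℕ) * p2 ^ 1) p2 := by
      unfold H
      exact ((hasDerivAt_pow 2 p2).const_add (p1 ^ 2)).add_const _
    exact h.deriv
  -- d8 : ∂X8/∂q2
  have d8 : deriv (fun x => X8 a q1 x p1 p2) q2
      = p1 * (((7/2) * p2 ^ 5 * W
        + (35/8) * p2 ^ 3 * ((2:ℕ) * V ^ 1 * W))
        + (35/16) * p2 * ((3:ℕ) * V ^ 2 * W)) := by
    have h : HasDerivAt (fun x : ℝ => X8 a q1 x p1 p2)
        (p1 * (((7/2) * p2 ^ 5 * W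
          + (35/8) * p2 ^ 3 * ((2:ℕ) * V ^ 1 * W))
          + (35/16) * p2 * ((3:ℕ) * V ^ 2 * W))) q2 := by
      unfold X8
      have t1 := (hv.const_mul ((7/2) * p2 ^ 5)).const_add (p2 ^ 7)
      have t2 := t1.add ((hv.pow 2).const_mul ((35/8) * p2 ^ 3))
      have t3 := t2.add ((hv.pow 3).const_mul ((35/16) * p2))
      exact (t3.const_mul p1).add_const _
    simpa using h.deriv
  have key : q2 ^ (-(3:ℝ)/4) * (q2 ^ ((1:ℝ)/4)) ^ 3 = 1 := by
    rw [← Real.rpow_natCast (q2 ^ ((1:ℝ)/4)) 3, ← Real.rpow_mul hq2.le,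
      ← Real.rpow_add hq2]
    norm_num
  have e : ((1:ℝ)/4 - 1) = -(3:ℝ)/4 := by norm_num
  unfold pb
  rw [d1, d2, d3, d4, d5, d6, d7, d8, hV, hW, e]
  push_cast
  linear_combination ((35:ℝ)/64 * a ^ 4 * p1) * key
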